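/- Let 0 < α < 2, B = B(α) = 2 - α - √(4-2α+α²), and r < 2B/(B+2). Then the function w(v,m) = v^{r/B} m^{r/2} is convex on the domain {v > 0, m > 0}. -/

import Mathlib

/-! The hypotheses force `B < 0 < B + 2`, hence `r < 0`, so `w = v ^ a * m ^ b` with `b = r / 2 < 0`
and `a + b = r (B + 2) / (2 B) > 1`. Setting `c = a + b` and `u = a / c ≥ 1`, we have
`w = (v ^ u * m ^ (1 - u)) ^ c`: the inner function is the perspective `m * (v / m) ^ u` of the
convex function `x ^ u`, hence convex and nonnegative, and raising a nonnegative convex function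
to a power `c ≥ 1` keeps it convex. -/

open Set

noncomputable def Bcoef (α : ℝ) : ℝ := 2 - α - Real.sqrt (4 - 2 * α + α ^ 2)

theorem ConvexOn.rpow {E : Type*} [AddCommMonoid E] [Module ℝ E] {s : Set E} {f : E → ℝ}
    {p : ℝ} (hf : ConvexOn ℝ s f) (hf₀ : ∀ x ∈ s, 0 ≤ f x) (hp : 1 ≤ p) :
    ConvexOn ℝ s fun x => f x ^ p := by
  refine ⟨hf.1, fun x hx y hy a b ha hb hab => ?_⟩
  calc f (a • x + b • y) ^ p ≤ (a • f x + b • f y) ^ p :=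
        Real.rpow_le_rpow (hf₀ _ (hf.1 hx hy ha hb hab)) (hf.2 hx hy ha hb hab)
          (zero_le_one.trans hp)
    _ ≤ a • f x ^ p + b • f y ^ p :=
        (convexOn_rpow hp).2 (hf₀ x hx) (hf₀ y hy) ha hb hab

lemma weighted_mediant_eq {x₁ x₂ y₁ y₂ a b : ℝ} (hx : 0 < x₂) (hy : 0 < y₂)
    (hz : 0 < a * x₂ + b * y₂) :
    (a * x₁ + b * y₁) / (a * x₂ + b * y₂) =
      a * x₂ / (a * x₂ + b * y₂) * (x₁ / x₂) + b * y₂ / (a * x₂ + b * y₂) * (y₁ / y₂) := by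
  field_simp

theorem ConvexOn.perspective {s : Set ℝ} {f : ℝ → ℝ} (hf : ConvexOn ℝ s f) :
    ConvexOn ℝ {p : ℝ × ℝ | 0 < p.2 ∧ p.1 / p.2 ∈ s} fun p => p.2 * f (p.1 / p.2) := by
  have key : ∀ ⦃x y : ℝ × ℝ⦄, 0 < x.2 → 0 < y.2 → ∀ ⦃a b : ℝ⦄, 0 ≤ a → 0 ≤ b → a + b = 1 →
      0 < a * x.2 + b * y.2 ∧ 0 ≤ a * x.2 / (a * x.2 + b * y.2) ∧
        0 ≤ b * y.2 / (a * x.2 + b * y.2) ∧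
        a * x.2 / (a * x.2 + b * y.2) + b * y.2 / (a * x.2 + b * y.2) = 1 := by
    intro x y hx hy a b ha hb hab
    have hz : 0 < a * x.2 + b * y.2 := convex_Ioi (0 : ℝ) hx hy ha hb hab
    exact ⟨hz, by positivity, by positivity, by field_simp⟩
  refine ⟨fun x ⟨hx, hxs⟩ y ⟨hy, hys⟩ a b ha hb hab => ?_,
    fun x ⟨hx, hxs⟩ y ⟨hy, hys⟩ a b ha hb hab => ?_⟩
  all_goals
    obtain ⟨hz, hwx, hwy, hwsum⟩ := key hx hy ha hb hab
    simp only [mem_ofPred_eq, Prod.fst_add, Prod.snd_add, Prod.smul_fst, Prod.smul_snd,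
      smul_eq_mul]
    rw [weighted_mediant_eq hx hy hz]
  · exact ⟨hz, hf.1 hxs hys hwx hwy hwsum⟩
  · calc (a * x.2 + b * y.2) * f (a * x.2 / (a * x.2 + b * y.2) * (x.1 / x.2)
          + b * y.2 / (a * x.2 + b * y.2) * (y.1 / y.2))
        ≤ (a * x.2 + b * y.2) * (a * x.2 / (a * x.2 + b * y.2) * f (x.1 / x.2)
          + b * y.2 / (a * x.2 + b * y.2) * f (y.1 / y.2)) :=
          mul_le_mul_of_nonneg_left (hf.2 hxs hys hwx hwy hwsum) hz.le
      _ = a * (x.2 * f (x.1 / x.2)) + b * (y.2 * f (y.1 / y.2)) := by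
          field_simp

theorem convexOn_rpow_mul_rpow_one_sub {u : ℝ} (hu : 1 ≤ u) :
    ConvexOn ℝ {p : ℝ × ℝ | 0 < p.1 ∧ 0 < p.2} fun p => p.1 ^ u * p.2 ^ (1 - u) := by
  refine ((convexOn_rpow hu).perspective.subset ?_ ((convex_Ioi 0).prod (convex_Ioi 0))).congr ?_
  · exact fun p ⟨h₁, h₂⟩ => ⟨h₂, mem_Ici.2 (div_nonneg h₁.le h₂.le)⟩
  · rintro p ⟨h₁, h₂⟩
    dsimp only
    rw [Real.div_rpow h₁.le h₂.le, Real.rpow_sub h₂, Real.rpow_one]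
    field_simp

theorem convexOn_rpow_mul_rpow {a b : ℝ} (hb : b ≤ 0) (hab : 1 ≤ a + b) :
    ConvexOn ℝ {p : ℝ × ℝ | 0 < p.1 ∧ 0 < p.2} fun p => p.1 ^ a * p.2 ^ b := by
  set c := a + b
  have hc : 0 < c := by linarith
  have hu : 1 ≤ a / c := (one_le_div hc).2 (by linarith)
  have hbc : (1 - a / c) * c = b := by field_simp; ring
  refine ((convexOn_rpow_mul_rpow_one_sub hu).rpow
    (fun p ⟨h₁, h₂⟩ => by positivity) hab).congr ?_
  rintro p ⟨h₁, h₂⟩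
  dsimp only
  rw [Real.mul_rpow (by positivity) (by positivity), ← Real.rpow_mul h₁.le,
    ← Real.rpow_mul h₂.le, div_mul_cancel₀ a hc.ne', hbc]

lemma sqrt_four_sub_two_mul_add_sq_sq (α : ℝ) :
    Real.sqrt (4 - 2 * α + α ^ 2) ^ 2 = 4 - 2 * α + α ^ 2 :=
  Real.sq_sqrt (by nlinarith [sq_nonneg (α - 1)])

lemma Bcoef_neg {α : ℝ} (hα : 0 < α) : Bcoef α < 0 := by
  have := sqrt_four_sub_two_mul_add_sq_sq α
  unfold Bcoef
  nlinarith [Real.sqrt_nonneg (4 - 2 * α + α ^ 2)]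

lemma Bcoef_add_two_pos {α : ℝ} (hα : α < 2) : 0 < Bcoef α + 2 := by
  have := sqrt_four_sub_two_mul_add_sq_sq α
  unfold Bcoef
  nlinarith [Real.sqrt_nonneg (4 - 2 * α + α ^ 2)]

/-- for 0 < α < 2 and r < 2B/(B+2) with B = B(α),
w(v,m) = v^{r/B} m^{r/2} is convex on the open quadrant {v > 0, m > 0}. -/
theorem w_convex (α r : ℝ) (hα0 : 0 < α) (hα2 : α < 2)
    (hr : r < 2 * Bcoef α / (Bcoef α + 2)) :
    ConvexOn ℝ {p : ℝ × ℝ | 0 < p.1 ∧ 0 < p.2}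
      (fun p : ℝ × ℝ => p.1 ^ (r / Bcoef α) * p.2 ^ (r / 2)) := by
  have hB := Bcoef_neg hα0
  have hB2 := Bcoef_add_two_pos hα2
  have hr' : r * (Bcoef α + 2) < 2 * Bcoef α := (lt_div_iff₀ hB2).1 hr
  have hr0 : r < 0 := by nlinarith
  refine convexOn_rpow_mul_rpow (by linarith) ?_
  have hsum : r / Bcoef α + r / 2 = r * (Bcoef α + 2) / (2 * Bcoef α) := by
    field_simp [hB.ne]; ring
  rw [hsum, le_div_iff_of_neg (by linarith)]
  linarith
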